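/- Let F : [0,∞) → [0,1] be nonincreasing and right-continuous with F(0) = 1, let c := inf{t ≥ 0 : F(t) = 0} (with c = ∞ if F never vanishes), let ν be the Lebesgue–Stieltjes measure of the nondecreasing right-continuous function t ↦ 1 − F(t), and define Λ(t) := ∫_{(0,t]} F(s−)⁻¹ dν(s) for t < c, where F(s−) denotes the left limit of F at s. Then for every t with 0 < t < c, the jump of Λ at t equals ΔΛ(t) := Λ(t) − Λ(t−) = (F(t−) − F(t)) / F(t−) = 1 − F(t)/F(t−); in particular 0 ≤ ΔΛ(t) < 1 whenever F(t) > 0. -/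

import Mathlib

/-!
Since `F(s-)⁻¹` is bounded by `F(t)⁻¹` on `(0, t]`, dominated convergence shows that
`Λ(t) - Λ(s) = ∫_{(s,t]} F(u-)⁻¹ dν(u)` tends, as `s → t⁻`, to the contribution
`ν{t} · F(t-)⁻¹` of the atom at `t`. The same argument with the integrand `1` identifies the atom:
`ν{t} = lim_{s → t⁻} (F(s) - F(t)) = F(t-) - F(t)`.
-/

open MeasureTheory Filter Topology Set Function

theorem eventuallyEq_comp_max_nhdsLT {β : Type*} {F : ℝ → β} {a t : ℝ} (ht : a < t) :
    (fun x => F (max a x)) =ᶠ[𝓝[<] t] F := by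
  filter_upwards [Ioo_mem_nhdsLT ht] with x hx
  rw [max_eq_right hx.1.le]

namespace AntitoneOn

variable {F : ℝ → ℝ} {a t : ℝ}

theorem antitone_comp_max (hF : AntitoneOn F (Ici a)) : Antitone fun x => F (max a x) :=
  fun _ _ hxy => hF (le_max_left _ _ : a ≤ _) (le_max_left _ _ : a ≤ _) (max_le_max le_rfl hxy)

theorem leftLim_eq_leftLim_comp_max (hF : AntitoneOn F (Ici a)) (ht : a < t) :
    leftLim F t = leftLim (fun x => F (max a x)) t :=
  leftLim_eq_of_tendsto
    ((hF.antitone_comp_max.tendsto_leftLim t).congr' (eventuallyEq_comp_max_nhdsLT ht))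

theorem tendsto_leftLim (hF : AntitoneOn F (Ici a)) (ht : a < t) :
    Tendsto F (𝓝[<] t) (𝓝 (leftLim F t)) :=
  tendsto_leftLim_of_tendsto
    ⟨_, (hF.antitone_comp_max.tendsto_leftLim t).congr' (eventuallyEq_comp_max_nhdsLT ht)⟩

theorem le_leftLim (hF : AntitoneOn F (Ici a)) {s : ℝ} (hs : s ∈ Ioc a t) :
    F t ≤ leftLim F s := by
  rw [hF.leftLim_eq_leftLim_comp_max hs.1]
  simpa [max_eq_right (hs.1.trans_le hs.2).le] using hF.antitone_comp_max.le_leftLim hs.2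

theorem integrableOn_inv_leftLim (hF : AntitoneOn F (Ici a)) (hFt : 0 < F t) {μ : Measure ℝ}
    (hμ : μ (Ioc a t) ≠ ⊤) : IntegrableOn (fun s => (leftLim F s)⁻¹) (Ioc a t) μ := by
  have hG := hF.antitone_comp_max
  refine (Measure.integrableOn_of_bounded (M := (F t)⁻¹) hμ
      (hG.leftLim.measurable.inv.aestronglyMeasurable (μ := μ)) ?_).congr_fun
    (fun s hs => by simp only [Pi.inv_apply, hF.leftLim_eq_leftLim_comp_max hs.1])
    measurableSet_Ioc
  filter_upwards [ae_restrict_mem measurableSet_Ioc] with s hs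
  have hle := hF.le_leftLim hs
  rw [hF.leftLim_eq_leftLim_comp_max hs.1] at hle
  rw [Pi.inv_apply, norm_inv, Real.norm_of_nonneg (hFt.trans_le hle).le]
  exact inv_anti₀ hFt hle

end AntitoneOn

variable {E : Type*} [NormedAddCommGroup E] [NormedSpace ℝ E] [CompleteSpace E]

theorem tendsto_setIntegral_Ioc_nhdsLT {μ : Measure ℝ} {f : ℝ → E} {a t : ℝ} (ht : a < t)
    (hf : IntegrableOn f (Ioc a t) μ) :
    Tendsto (fun s => ∫ x in Ioc s t, f x ∂μ) (𝓝[<] t) (𝓝 (μ.real {t} • f t)) := by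
  have hsub : ∀ᶠ s in 𝓝[<] t, Ioc s t ⊆ Ioc a t := by
    filter_upwards [Ioo_mem_nhdsLT ht] with s hs using Ioc_subset_Ioc_left hs.1.le
  rw [← integral_singleton]
  have hind : ∀ᶠ s in 𝓝[<] t, ∫ x in Ioc s t, f x ∂μ
      = ∫ x in Ioc a t, (Ioc s t).indicator f x ∂μ := by
    filter_upwards [hsub] with s hs
    rw [integral_indicator measurableSet_Ioc, Measure.restrict_restrict measurableSet_Ioc,
      inter_eq_left.2 hs]
  have hlim : ∫ x in {t}, f x ∂μ = ∫ x in Ioc a t, ({t} : Set ℝ).indicator f x ∂μ := by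
    rw [integral_indicator (measurableSet_singleton t), Measure.restrict_restrict
      (measurableSet_singleton t), inter_eq_left.2 (singleton_subset_iff.2 (right_mem_Ioc.2 ht))]
  rw [hlim]
  refine (tendsto_integral_filter_of_dominated_convergence (fun x => ‖f x‖)
    (Eventually.of_forall fun s => hf.aestronglyMeasurable.indicator measurableSet_Ioc)
    (Eventually.of_forall fun s => ae_of_all _ fun x => norm_indicator_le_norm_self _ _)
    hf.norm (ae_of_all _ fun x => ?_)).congr' (hind.mono fun _ h => h.symm)
  -- as `s → t⁻`, the sets `Ioc s t` shrink pointwise to `{t}`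
  refine tendsto_const_nhds.congr' ?_
  rcases lt_trichotomy x t with hx | rfl | hx
  · filter_upwards [Ioo_mem_nhdsLT hx] with s hs
    rw [indicator_of_notMem (show x ∉ ({t} : Set ℝ) from hx.ne),
      indicator_of_notMem fun h => hs.1.not_ge h.1.le]
  · filter_upwards [self_mem_nhdsWithin] with s (hs : s < x)
    rw [indicator_of_mem (mem_singleton x),
      indicator_of_mem (show x ∈ Ioc s x from ⟨hs, le_rfl⟩)]
  · refine Eventually.of_forall fun s => ?_
    beta_reduce
    rw [indicator_of_notMem (show x ∉ ({t} : Set ℝ) from hx.ne'),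
      indicator_of_notMem fun h => h.2.not_gt hx]

theorem sub_leftLim_eq_measureReal_singleton_smul {μ : Measure ℝ} {g Λ : ℝ → E} {a t : ℝ}
    (ht : a < t) (hg : IntegrableOn g (Ioc a t) μ)
    (hΛ : ∀ s ∈ Ioc a t, Λ s = ∫ x in Ioc a s, g x ∂μ) :
    Λ t - leftLim Λ t = μ.real {t} • g t := by
  have hdiff : ∀ᶠ s in 𝓝[<] t, Λ t - Λ s = ∫ x in Ioc s t, g x ∂μ := by
    filter_upwards [Ioo_mem_nhdsLT ht] with s hs
    rw [hΛ t ⟨ht, le_rfl⟩, hΛ s ⟨hs.1, hs.2.le⟩, ← Ioc_union_Ioc_eq_Ioc hs.1.le hs.2.le,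
      setIntegral_union (Ioc_disjoint_Ioc_of_le le_rfl) measurableSet_Ioc
        (hg.mono_set (Ioc_subset_Ioc_right hs.2.le)) (hg.mono_set (Ioc_subset_Ioc_left hs.1.le)),
      add_sub_cancel_left]
  have hlim : Tendsto Λ (𝓝[<] t) (𝓝 (Λ t - μ.real {t} • g t)) := by
    refine (tendsto_const_nhds.sub (tendsto_setIntegral_Ioc_nhdsLT ht hg)).congr' ?_
    filter_upwards [hdiff] with s hs
    rw [← hs, sub_sub_cancel]
  rw [leftLim_eq_of_tendsto hlim, sub_sub_cancel]

theorem measureReal_singleton_eq_leftLim_sub {μ : Measure ℝ} {F : ℝ → ℝ} {a t : ℝ}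
    (hF : AntitoneOn F (Ici a)) (ht : a < t)
    (hμ : ∀ s ∈ Ico a t, μ (Ioc s t) = ENNReal.ofReal (F s - F t)) :
    μ.real {t} = leftLim F t - F t := by
  have hfin : μ (Ioc a t) ≠ ⊤ := by rw [hμ a ⟨le_rfl, ht⟩]; exact ENNReal.ofReal_ne_top
  have h1 := tendsto_setIntegral_Ioc_nhdsLT ht (integrableOn_const (C := (1 : ℝ)) hfin)
  have h2 :
      Tendsto (fun s => ∫ _ in Ioc s t, (1 : ℝ) ∂μ) (𝓝[<] t) (𝓝 (leftLim F t - F t)) := by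
    refine ((hF.tendsto_leftLim ht).sub_const (F t)).congr' ?_
    filter_upwards [Ioo_mem_nhdsLT ht] with s hs
    rw [setIntegral_const, smul_eq_mul, mul_one, measureReal_def, hμ s ⟨hs.1.le, hs.2⟩,
      ENNReal.toReal_ofReal (sub_nonneg.2 (hF hs.1.le (hs.1.trans hs.2).le hs.2.le))]
  simpa using tendsto_nhds_unique h1 h2

theorem stmt_18_general
    (F : ℝ → ℝ)
    (hF01 : ∀ t : ℝ, 0 ≤ F t ∧ F t ≤ 1)
    (hFanti : AntitoneOn F (Set.Ici 0))
    (c : EReal)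
    (hc : c = sInf {v : EReal | ∃ u : ℝ, 0 ≤ u ∧ v = (u : EReal) ∧ F u = 0})
    (ν : Measure ℝ)
    (hν : ∀ u v : ℝ, 0 ≤ u → u ≤ v →
      ν (Set.Ioc u v) = ENNReal.ofReal ((1 - F v) - (1 - F u)))
    (Λ : ℝ → ℝ)
    (hΛ : ∀ t : ℝ, Λ t = ∫ s in Set.Ioc (0 : ℝ) t, (Function.leftLim F s)⁻¹ ∂ν) :
    ∀ t : ℝ, 0 < t → (t : EReal) < c →
      (Λ t - Function.leftLim Λ t = (Function.leftLim F t - F t) / Function.leftLim F t ∧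
       Λ t - Function.leftLim Λ t = 1 - F t / Function.leftLim F t ∧
       (0 < F t → 0 ≤ Λ t - Function.leftLim Λ t ∧ Λ t - Function.leftLim Λ t < 1)) := by
  intro t ht htc
  have hFt : 0 < F t := (hF01 t).1.lt_of_ne fun h =>
    htc.not_ge (hc ▸ sInf_le ⟨t, ht.le, rfl, h.symm⟩)
  have hνIoc : ∀ s ∈ Ico 0 t, ν (Ioc s t) = ENNReal.ofReal (F s - F t) := fun s hs => by
    rw [hν s t hs.1 hs.2.le, sub_sub_sub_cancel_left]
  have hint : IntegrableOn (fun s => (leftLim F s)⁻¹) (Ioc 0 t) ν :=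
    hFanti.integrableOn_inv_leftLim hFt
      (by rw [hνIoc 0 ⟨le_rfl, ht⟩]; exact ENNReal.ofReal_ne_top)
  have hjump : Λ t - leftLim Λ t = (leftLim F t - F t) / leftLim F t := by
    rw [sub_leftLim_eq_measureReal_singleton_smul ht hint fun s _ => hΛ s,
      measureReal_singleton_eq_leftLim_sub hFanti ht hνIoc, smul_eq_mul, div_eq_mul_inv]
  have hFle : F t ≤ leftLim F t := hFanti.le_leftLim ⟨ht, le_rfl⟩
  have hpos : 0 < leftLim F t := hFt.trans_le hFle
  refine ⟨hjump, by rw [hjump]; field_simp, fun _ => ⟨?_, ?_⟩⟩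
  · rw [hjump]; exact div_nonneg (sub_nonneg.2 hFle) hpos.le
  · rw [hjump, div_lt_one hpos]; linarith

theorem stmt_18
    (F : ℝ → ℝ)
    (hF01 : ∀ t : ℝ, 0 ≤ F t ∧ F t ≤ 1)
    (hF0 : F 0 = 1)
    (hFanti : AntitoneOn F (Set.Ici 0))
    (hFrc : ∀ t : ℝ, 0 ≤ t → ContinuousWithinAt F (Set.Ici t) t)
    (c : EReal)
    (hc : c = sInf {v : EReal | ∃ u : ℝ, 0 ≤ u ∧ v = (u : EReal) ∧ F u = 0})
    (ν : Measure ℝ)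
    (hν : ∀ u v : ℝ, 0 ≤ u → u ≤ v →
      ν (Set.Ioc u v) = ENNReal.ofReal ((1 - F v) - (1 - F u)))
    (Λ : ℝ → ℝ)
    (hΛ : ∀ t : ℝ, Λ t = ∫ s in Set.Ioc (0 : ℝ) t, (Function.leftLim F s)⁻¹ ∂ν) :
    ∀ t : ℝ, 0 < t → (t : EReal) < c →
      (Λ t - Function.leftLim Λ t = (Function.leftLim F t - F t) / Function.leftLim F t ∧
       Λ t - Function.leftLim Λ t = 1 - F t / Function.leftLim F t ∧
       (0 < F t → 0 ≤ Λ t - Function.leftLim Λ t ∧ Λ t - Function.leftLim Λ t < 1)) :=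
  stmt_18_general F hF01 hFanti c hc ν hν Λ hΛ
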